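/- Let β ∈ K with ‖β − b₁‖ < 1/(4√2), let i > 1 be an integer, and let D_r(x) ⊆ Ψ_i with 0 < r < √2·ρ_i². Then R_β^{∘3}(D_r(x)) = D_δ(R_β^{∘3}(x)) with δ = 4·ρ_i²·r; moreover δ < √2·ρ_{i−1}² and D_δ(R_β^{∘3}(x)) ⊆ Ψ_{i−1}. -/

import Mathlib

set_option linter.unusedSectionVars false

section helpers
variable {K : Type*} [NormedField K] [IsUltrametricDist K]

lemma nadd {x y : K} (h : ‖y‖ < ‖x‖) : ‖x + y‖ = ‖x‖ := by
  refine le_antisymm ((IsUltrametricDist.norm_add_le_max x y).trans (max_le le_rfl h.le)) ?_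
  by_contra hlt
  push_neg at hlt
  have : ‖x‖ ≤ max ‖x + y‖ ‖y‖ := by
    simpa using IsUltrametricDist.norm_add_le_max (x + y) (-y)
  rcases max_cases ‖x+y‖ ‖y‖ with ⟨he,_⟩|⟨he,_⟩ <;> rw [he] at this <;> linarith

lemma nadd' {x y : K} (h : ‖y‖ < ‖x‖) : ‖y + x‖ = ‖x‖ := by rw [add_comm]; exact nadd h

lemma nsub {x y : K} (h : ‖y‖ < ‖x‖) : ‖x - y‖ = ‖x‖ := by
  rw [sub_eq_add_neg]; exact nadd (by simpa)

lemma nsub' {x y : K} (h : ‖y‖ < ‖x‖) : ‖y - x‖ = ‖x‖ := by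
  rw [← norm_neg]; simpa using nsub h

lemma nmax (x y : K) : ‖x + y‖ ≤ max ‖x‖ ‖y‖ := IsUltrametricDist.norm_add_le_max x y

lemma nmaxsub (x y : K) : ‖x - y‖ ≤ max ‖x‖ ‖y‖ := by
  rw [sub_eq_add_neg]; simpa using IsUltrametricDist.norm_add_le_max x (-y)

lemma step_eq (β ia x u : K) (h1 : β*x - ia ≠ 0) (h2 : β*(x+u) - ia ≠ 0) :
    ((x+u)^2 - (x+u))/(β*(x+u) - ia) - (x^2 - x)/(β*x - ia)
      = u * ((β*x^2 - 2*ia*x + ia) + (β*x - ia)*u) / ((β*x - ia) * (β*(x+u) - ia)) := by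
  rw [div_sub_div _ _ h2 h1, div_eq_div_iff (mul_ne_zero h2 h1) (mul_ne_zero h1 h2)]; ring

lemma step_norm (β ia x u : K) (h1 : β*x - ia ≠ 0) (h2 : β*(x+u) - ia ≠ 0) :
    ‖((x+u)^2 - (x+u))/(β*(x+u) - ia) - (x^2 - x)/(β*x - ia)‖
      = ‖u‖ * ‖(β*x^2 - 2*ia*x + ia) + (β*x - ia)*u‖ / (‖β*x - ia‖ * ‖β*(x+u) - ia‖) := by
  rw [step_eq β ia x u h1 h2, norm_div, norm_mul, norm_mul]

lemma Cnorm_big {b ia z : K} (hia : ‖ia‖ = 1/2) (hb : ‖b‖ = 1) (hz : 1/2 < ‖z‖) :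
    ‖b*z - ia‖ = ‖z‖ := by
  have h1 : ‖b*z‖ = ‖z‖ := by rw [norm_mul, hb, one_mul]
  rw [nsub (by rw [h1, hia]; exact hz), h1]

lemma Cnorm_small {b ia z : K} (hia : ‖ia‖ = 1/2) (hb : ‖b‖ = 1) (hz : ‖z‖ < 1/2) :
    ‖b*z - ia‖ = 1/2 := by
  rw [nsub' (by rw [norm_mul, hb, one_mul, hia]; exact hz), hia]

lemma Enorm_one {b ia z : K} (hia : ‖ia‖ = 1/2) (h2 : ‖(2:K)‖ = 1/2) (hb : ‖b‖ = 1)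
    (hz : ‖z‖ = 1) : ‖b*z^2 - 2*ia*z + ia‖ = 1 := by
  have h : b*z^2 - 2*ia*z + ia = b*z^2 - (2*ia*z - ia) := by ring
  have hbz : ‖b*z^2‖ = 1 := by rw [norm_mul, norm_pow, hb, hz]; norm_num
  have hbound : ‖2*ia*z - ia‖ < 1 := by
    refine lt_of_le_of_lt (nmaxsub _ _) ?_
    rw [norm_mul, norm_mul, h2, hia, hz]
    norm_num
  rw [h, nsub (by rw [hbz]; exact hbound), hbz]

lemma Enorm_small {b ia z : K} (hia : ‖ia‖ = 1/2) (h2 : ‖(2:K)‖ = 1/2) (hb : ‖b‖ = 1)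
    (hz : ‖z‖ < 1/2) : ‖b*z^2 - 2*ia*z + ia‖ = 1/2 := by
  have h : b*z^2 - 2*ia*z + ia = ia + (b*z^2 - 2*ia*z) := by ring
  have hbound : ‖b*z^2 - 2*ia*z‖ < 1/2 := by
    refine lt_of_le_of_lt (nmaxsub _ _) ?_
    rw [norm_mul, norm_pow, norm_mul, norm_mul, h2, hia, hb, one_mul]
    have h0 : (0:ℝ) ≤ ‖z‖ := norm_nonneg z
    rw [max_lt_iff]
    constructor <;> nlinarith
  rw [h, nadd (by rw [hia]; exact hbound), hia]

lemma unit_step {b ia z u : K} (hia : ‖ia‖ = 1/2) (h2 : ‖(2:K)‖ = 1/2) (hb : ‖b‖ = 1)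
    (hz : ‖z‖ = 1) (hu : ‖u‖ ≤ 1/4) :
    ‖((z+u)^2 - (z+u))/(b*(z+u) - ia) - (z^2 - z)/(b*z - ia)‖ = ‖u‖ := by
  have hC : ‖b*z - ia‖ = 1 := by rw [Cnorm_big hia hb (by rw [hz]; norm_num), hz]
  have hCu : b*(z+u) - ia = (b*z - ia) + b*u := by ring
  have hD : ‖b*(z+u) - ia‖ = 1 := by
    rw [hCu, nadd (by rw [hC, norm_mul, hb, one_mul]; linarith), hC]
  have hE : ‖b*z^2 - 2*ia*z + ia‖ = 1 := Enorm_one hia h2 hb hz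
  have hEC : ‖(b*z^2 - 2*ia*z + ia) + (b*z - ia)*u‖ = 1 := by
    rw [nadd (by rw [norm_mul, hC, one_mul, hE]; linarith), hE]
  rw [step_norm b ia z u (by rw [← norm_pos_iff, hC]; norm_num)
    (by rw [← norm_pos_iff, hD]; norm_num), hEC, hC, hD]
  ring

lemma small_step {b ia z u : K} (hia : ‖ia‖ = 1/2) (h2 : ‖(2:K)‖ = 1/2) (hb : ‖b‖ = 1)
    (hz : ‖z‖ < 1/2) (hu : ‖u‖ ≤ 1/4) :
    ‖((z+u)^2 - (z+u))/(b*(z+u) - ia) - (z^2 - z)/(b*z - ia)‖ = 2*‖u‖ := by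
  have hC : ‖b*z - ia‖ = 1/2 := Cnorm_small hia hb hz
  have hCu : b*(z+u) - ia = (b*z - ia) + b*u := by ring
  have hD : ‖b*(z+u) - ia‖ = 1/2 := by
    by_cases h : ‖u‖ < 1/4
    · rw [hCu, nadd (by rw [hC, norm_mul, hb, one_mul]; linarith), hC]
    · have hu4 : ‖u‖ = 1/4 := le_antisymm hu (not_lt.mp h)
      rw [hCu, nadd (by rw [hC, norm_mul, hb, one_mul, hu4]; norm_num), hC]
  have hE : ‖b*z^2 - 2*ia*z + ia‖ = 1/2 := Enorm_small hia h2 hb hz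
  have hEC : ‖(b*z^2 - 2*ia*z + ia) + (b*z - ia)*u‖ = 1/2 := by
    rw [nadd (by rw [norm_mul, hC, hE]; nlinarith [norm_nonneg u]), hE]
  rw [step_norm b ia z u (by rw [← norm_pos_iff, hC]; norm_num)
    (by rw [← norm_pos_iff, hD]; norm_num), hEC, hC, hD]
  ring

lemma crit_step {b ia c u : K} {s : ℝ} (hs : s^2 = 2) (hs1 : 1 < s)
    (hia : ‖ia‖ = 1/2) (hb : ‖b‖ = 1) (hc : ‖c‖ = s/2)
    (hE : ‖b*c^2 - 2*ia*c + ia‖ < (s/2)*‖u‖) (hu : ‖u‖ < s/2) :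
    ‖((c+u)^2 - (c+u))/(b*(c+u) - ia) - (c^2 - c)/(b*c - ia)‖ = s*‖u‖^2 := by
  have hC : ‖b*c - ia‖ = s/2 := by
    rw [Cnorm_big hia hb (by rw [hc]; nlinarith), hc]
  have hCu : b*(c+u) - ia = (b*c - ia) + b*u := by ring
  have hD : ‖b*(c+u) - ia‖ = s/2 := by
    rw [hCu, nadd (by rw [hC, norm_mul, hb, one_mul]; exact hu), hC]
  have hEC : ‖(b*c^2 - 2*ia*c + ia) + (b*c - ia)*u‖ = (s/2)*‖u‖ := by
    rw [nadd' (by rw [norm_mul, hC]; exact hE), norm_mul, hC]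
  rw [step_norm b ia c u (by rw [← norm_pos_iff, hC]; nlinarith)
    (by rw [← norm_pos_iff, hD]; nlinarith), hEC, hC, hD]
  rw [div_eq_iff (by positivity)]
  linear_combination (-(s*‖u‖^2)/4) * hs

lemma param_eq (β b ia z : K) (h1 : β*z - ia ≠ 0) (h2 : b*z - ia ≠ 0) :
    (z^2-z)/(β*z-ia) - (z^2-z)/(b*z-ia) = (z^2-z)*((b-β)*z)/((β*z-ia)*(b*z-ia)) := by
  rw [div_sub_div _ _ h1 h2, div_eq_div_iff (mul_ne_zero h1 h2) (mul_ne_zero h1 h2)]; ring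

lemma param_norm (β b ia z : K) (h1 : β*z - ia ≠ 0) (h2 : b*z - ia ≠ 0) :
    ‖(z^2-z)/(β*z-ia) - (z^2-z)/(b*z-ia)‖
      = ‖z^2-z‖ * (‖b-β‖ * ‖z‖) / (‖β*z-ia‖ * ‖b*z-ia‖) := by
  rw [param_eq β b ia z h1 h2, norm_div, norm_mul, norm_mul, norm_mul]

lemma c1_norm_sq {b ia c : K} (hia : ‖ia‖ = 1/2) (h2 : ‖(2:K)‖ = 1/2) (hb : ‖b‖ = 1)
    (heq : b*c^2 - 2*ia*c + ia = 0) : ‖c‖^2 = 1/2 := by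
  have heq' : b*c^2 = 2*ia*c - ia := by linear_combination heq
  have hbc : ‖b*c^2‖ = ‖c‖^2 := by rw [norm_mul, norm_pow, hb, one_mul]
  have hn2c : ‖2*ia*c‖ = ‖c‖/4 := by rw [norm_mul, norm_mul, h2, hia]; ring
  have h0 : (0:ℝ) ≤ ‖c‖ := norm_nonneg c
  rcases lt_trichotomy (‖c‖^2) (1/2) with h | h | h
  · exfalso
    have hlt : ‖2*ia*c‖ < ‖ia‖ := by rw [hn2c, hia]; nlinarith
    have : ‖b*c^2‖ = 1/2 := by rw [heq', nsub' hlt, hia]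
    rw [hbc] at this; linarith
  · exact h
  · exfalso
    have hle : ‖c‖^2 ≤ max (‖c‖/4) (1/2) := by
      calc ‖c‖^2 = ‖b*c^2‖ := hbc.symm
        _ = ‖2*ia*c - ia‖ := by rw [heq']
        _ ≤ max ‖2*ia*c‖ ‖ia‖ := nmaxsub _ _
        _ = max (‖c‖/4) (1/2) := by rw [hn2c, hia]
    rcases max_cases (‖c‖/4) (1/2) with ⟨he,_⟩|⟨he,_⟩ <;> rw [he] at hle <;> nlinarith

lemma quad_root {K : Type*} [Field K] [IsAlgClosed K] (p q : K) :
    ∃ u v : K, u^2 + p*u + q = 0 ∧ v^2 + p*v + q = 0 ∧ u + v = -p ∧ u * v = q := by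
  obtain ⟨u, hu⟩ := IsAlgClosed.exists_root (Polynomial.C 1 * Polynomial.X^2
      + Polynomial.C p * Polynomial.X + Polynomial.C q)
    (by rw [Polynomial.degree_quadratic one_ne_zero]; exact two_ne_zero)
  have hu' : u^2 + p*u + q = 0 := by
    simpa [Polynomial.IsRoot] using hu
  exact ⟨u, -p - u, hu', by linear_combination hu', by ring, by linear_combination -hu'⟩

lemma image_ball {K : Type*} [NormedField K] [IsAlgClosed K] [IsUltrametricDist K]
    (β ia x : K) (r : ℝ) (hr : 0 < r)
    (hC : β*x - ia ≠ 0)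
    (hbeta : ‖β‖ * r ≤ ‖β*x - ia‖)
    (hCE : ‖β*x - ia‖ * r ≤ ‖β*x^2 - 2*ia*x + ia‖) :
    (fun z : K => (z^2 - z)/(β*z - ia)) '' Metric.ball x r
      = Metric.ball ((x^2 - x)/(β*x - ia))
          (‖β*x^2 - 2*ia*x + ia‖ / ‖β*x - ia‖^2 * r) := by
  set C : K := β*x - ia with hCdef
  set E : K := β*x^2 - 2*ia*x + ia with hEdef
  have hCpos : 0 < ‖C‖ := norm_pos_iff.mpr hC
  have hEpos : 0 < ‖E‖ := lt_of_lt_of_le (by positivity) hCE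
  set m : ℝ := ‖E‖ / ‖C‖^2 with hmdef
  have hmpos : 0 < m := by positivity
  have hCne : ‖C‖ ≠ 0 := hCpos.ne'
  -- facts for u in ball
  have keyβ : ∀ u : K, ‖u‖ < r → ‖β*u‖ < ‖C‖ := by
    intro u hu
    rcases eq_or_ne β 0 with rfl | hβ0
    · simpa using hCpos
    · rw [norm_mul]
      calc ‖β‖ * ‖u‖ < ‖β‖ * r := by
            exact mul_lt_mul_of_pos_left hu (norm_pos_iff.mpr hβ0)
        _ ≤ ‖C‖ := hbeta
  have keyC : ∀ u : K, ‖u‖ < r → ‖C*u‖ < ‖E‖ := by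
    intro u hu
    rw [norm_mul]
    calc ‖C‖ * ‖u‖ < ‖C‖ * r := mul_lt_mul_of_pos_left hu hCpos
      _ ≤ ‖E‖ := hCE
  have keyD : ∀ u : K, ‖u‖ < r → ‖C + β*u‖ = ‖C‖ := fun u hu => nadd (keyβ u hu)
  have keyD' : ∀ u : K, ‖u‖ < r → β*(x+u) - ia = C + β*u := by intro u _; rw [hCdef]; ring
  ext y
  simp only [Set.mem_image, Metric.mem_ball, dist_eq_norm]
  constructor
  · rintro ⟨z, hz, rfl⟩
    set u : K := z - x with hudef
    have hzu : z = x + u := by rw [hudef]; ring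
    have hu : ‖u‖ < r := hz
    have hD0 : β*(x+u) - ia ≠ 0 := by
      rw [keyD' u hu]; exact norm_pos_iff.mp (by rw [keyD u hu]; exact hCpos)
    have hnorm := step_norm β ia x u hC hD0
    rw [keyD' u hu] at hnorm
    rw [← hCdef, ← hEdef] at hnorm
    rw [hzu, keyD' u hu, hnorm, keyD u hu, nadd (keyC u hu)]
    calc ‖u‖ * ‖E‖ / (‖C‖ * ‖C‖) = ‖u‖ * m := by
          rw [hmdef, pow_two, mul_div_assoc]
      _ < r * m := by exact mul_lt_mul_of_pos_right hu hmpos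
      _ = m * r := by ring
  · intro hy
    set Rx : K := (x^2 - x)/C with hRxdef
    set p : K := (2*x - 1) - y*β with hpdef
    set q : K := (x^2 - x) - y*C with hqdef
    have hq : q = -((y - Rx)*C) := by
      rw [hqdef, hRxdef]; field_simp; ring
    have hEC : E = (2*x-1)*C - (x^2-x)*β := by rw [hEdef, hCdef]; ring
    have hp : p = E/C - (y - Rx)*β := by
      rw [hpdef, hRxdef, hEC]; field_simp; ring
    have hnq : ‖q‖ < ‖E‖ / ‖C‖ * r := by
      rw [hq, norm_neg, norm_mul]
      calc ‖y - Rx‖ * ‖C‖ < (m * r) * ‖C‖ := mul_lt_mul_of_pos_right hy hCpos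
        _ = ‖E‖/‖C‖ * r := by rw [hmdef]; field_simp [hCne]
    have hnp : ‖p‖ = ‖E‖ / ‖C‖ := by
      have h1 : ‖(y - Rx)*β‖ < ‖E‖/‖C‖ := by
        rcases eq_or_ne β 0 with rfl | hβ0
        · simpa using div_pos hEpos hCpos
        · rw [norm_mul]
          calc ‖y - Rx‖ * ‖β‖ < (m * r) * ‖β‖ :=
                mul_lt_mul_of_pos_right hy (norm_pos_iff.mpr hβ0)
            _ = m * (‖β‖ * r) := by ring
            _ ≤ m * ‖C‖ := by
                exact mul_le_mul_of_nonneg_left hbeta hmpos.le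
            _ = ‖E‖/‖C‖ := by rw [hmdef]; field_simp [hCne]
      have : ‖E/C‖ = ‖E‖/‖C‖ := norm_div E C
      rw [hp, nsub (by rw [this]; exact h1), this]
    have hppos : 0 < ‖p‖ := by rw [hnp]; positivity
    obtain ⟨u, v, hu, hv, hsum, hprod⟩ := quad_root p q
    -- pick the small root
    have main : ∀ w w' : K, w^2 + p*w + q = 0 → w + w' = -p → w * w' = q →
        ‖w‖ ≤ ‖w'‖ → ∃ z : K, ‖z - x‖ < r ∧ (z^2 - z)/(β*z - ia) = y := by
      intro w w' hw hsw hpw hle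
      have hw' : ‖p‖ ≤ ‖w'‖ := by
        have : ‖p‖ = ‖w + w'‖ := by rw [hsw, norm_neg]
        rw [this]
        exact (IsUltrametricDist.norm_add_le_max w w').trans (by simpa [hle] using le_rfl)
      have hwlt : ‖w‖ < r := by
        have h2 : ‖w‖ * ‖p‖ ≤ ‖q‖ := by
          calc ‖w‖ * ‖p‖ ≤ ‖w‖ * ‖w'‖ := mul_le_mul_of_nonneg_left hw' (norm_nonneg w)
            _ = ‖q‖ := by rw [← norm_mul, hpw]
        have h3 : ‖w‖ * ‖p‖ < (‖E‖/‖C‖) * r := lt_of_le_of_lt h2 hnq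
        rw [← hnp] at h3
        have := lt_of_mul_lt_mul_right (by linarith [h3] : ‖w‖ * ‖p‖ < r * ‖p‖) hppos.le
        exact this
      refine ⟨x + w, by simpa using hwlt, ?_⟩
      have hD0 : β*(x+w) - ia ≠ 0 := by
        rw [keyD' w hwlt]
        exact norm_pos_iff.mp (by rw [keyD w hwlt]; exact hCpos)
      have hnum : (x+w)^2 - (x+w) = y * (β*(x+w) - ia) := by
        have hqe : q = (x^2 - x) - y*C := hqdef
        have hpe : p = (2*x - 1) - y*β := hpdef
        rw [hpe, hqe, hCdef] at hw
        linear_combination hw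
      rw [hnum, mul_div_assoc, div_self hD0, mul_one]
    rcases le_total ‖u‖ ‖v‖ with h | h
    · obtain ⟨z, hz1, hz2⟩ := main u v hu hsum hprod h
      exact ⟨z, hz1, hz2⟩
    · obtain ⟨z, hz1, hz2⟩ := main v u hv (by rw [← hsum]; ring) (by rw [← hprod]; ring) h
      exact ⟨z, hz1, hz2⟩


end helpers

/-- The sequence `ρ_i = 2^(1/2^i − 3/2)`. -/
noncomputable def rhoSeq (i : ℕ) : ℝ := (2 : ℝ) ^ ((1 : ℝ) / 2 ^ i - 3 / 2)


lemma rho_pos (i : ℕ) : 0 < rhoSeq i := Real.rpow_pos_of_pos two_pos _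

lemma rho_sq_eq (i : ℕ) : rhoSeq i ^ 2 = (2:ℝ) ^ ((2:ℝ) / 2 ^ i - 3) := by
  rw [rhoSeq, ← Real.rpow_natCast ((2:ℝ) ^ ((1:ℝ)/2^i - 3/2)) 2, ← Real.rpow_mul (by norm_num)]
  norm_num
  ring_nf

lemma rho_lb (i : ℕ) : Real.sqrt 2 / 4 < rhoSeq i := by
  have h4 : (4:ℝ) = 2 ^ (2:ℝ) := by
    rw [show (2:ℝ) = ((2:ℕ):ℝ) by norm_num, Real.rpow_natCast]; norm_num
  have : Real.sqrt 2 / 4 = (2:ℝ) ^ (-(3:ℝ)/2) := by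
    rw [Real.sqrt_eq_rpow, h4, ← Real.rpow_sub (by norm_num)]
    norm_num
  rw [this, rhoSeq]
  rw [Real.rpow_lt_rpow_left_iff (by norm_num : (1:ℝ) < 2)]
  have : (0:ℝ) < 1 / 2 ^ i := by positivity
  linarith

lemma rho_ub (i : ℕ) (hi : 2 ≤ i) : Real.sqrt 2 * rhoSeq i ^ 2 ≤ 1 / 4 := by
  have h4 : (1:ℝ)/4 = 2 ^ (-2:ℝ) := by
    rw [show (-2:ℝ) = ((-2:ℤ):ℝ) by norm_num, Real.rpow_intCast]; norm_num
  rw [rho_sq_eq, Real.sqrt_eq_rpow, ← Real.rpow_add (by norm_num), h4]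
  rw [Real.rpow_le_rpow_left_iff (by norm_num : (1:ℝ) < 2)]
  have h2i : (4:ℝ) ≤ 2 ^ i := by
    calc (4:ℝ) = 2^2 := by norm_num
    _ ≤ 2^i := by exact pow_le_pow_right₀ (by norm_num) hi
  have hpos : (0:ℝ) < 2 ^ i := by positivity
  have : (2:ℝ) / 2 ^ i ≤ 1/2 := by
    rw [div_le_div_iff₀ hpos (by norm_num)]; linarith
  linarith

lemma rho_succ (i : ℕ) (hi : 1 ≤ i) : rhoSeq (i-1) = 2 * Real.sqrt 2 * rhoSeq i ^ 2 := by
  have hpow : (2:ℝ) ^ (i-1) * 2 = 2 ^ i := by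
    rw [← pow_succ]
    congr 1
    omega
  rw [rho_sq_eq, rhoSeq, Real.sqrt_eq_rpow]
  rw [show (2:ℝ) * (2:ℝ)^((1:ℝ)/2) * (2:ℝ)^((2:ℝ)/2^i - 3)
      = (2:ℝ)^((1:ℝ)) * (2:ℝ)^((1:ℝ)/2) * (2:ℝ)^((2:ℝ)/2^i - 3) by rw [Real.rpow_one]]
  rw [← Real.rpow_add (by norm_num), ← Real.rpow_add (by norm_num)]
  congr 1
  have hpos : (0:ℝ) < 2 ^ i := by positivity
  have h1 : ((1:ℝ)/2^(i-1)) = 2 / 2^i := by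
    rw [div_eq_div_iff (by positivity : ((2:ℝ)^(i-1)) ≠ 0) hpos.ne']
    rw [one_mul, ← hpow]; ring
  rw [h1]; ring


lemma sq_eq_of_sq_eq {a b : ℝ} (ha : 0 ≤ a) (hb : 0 ≤ b) (h : a^2 = b^2) : a = b := by
  rcases mul_eq_zero.mp (show (a-b)*(a+b) = 0 by linear_combination h) with h' | h' <;> linarith

set_option maxHeartbeats 2000000 in
/-- For `‖β − b₁‖ < 1/(4√2)`, `i > 1` and `D_r(x) ⊆ Ψ_i` with
`0 < r < √2·ρ_i²`, one has `R_β^{∘3}(D_r(x)) = D_δ(R_β^{∘3}(x))` with `δ = 4ρ_i²r`;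
moreover `δ < √2·ρ_{i−1}²` and `D_δ(R_β^{∘3}(x)) ⊆ Ψ_{i−1}`. -/
theorem third_iterate_of_disk_in_sphere
    {K : Type*} [NormedField K] [CompleteSpace K] [IsAlgClosed K] [IsUltrametricDist K]
    (h2 : ‖(2 : K)‖ = 1 / 2)
    (a b₁ c₁ : K) (ha : ‖a‖ = 2) (hb₁ : ‖b₁‖ = 1)
    (R : K → K → K) (hRdef : ∀ β z, R β z = (z ^ 2 - z) / (β * z - 1 / a))
    (hc₁ : b₁ * c₁ ^ 2 - (2 / a) * c₁ + 1 / a = 0)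
    (hper : (R b₁)^[3] '' Metric.closedBall c₁ (1 / (2 * Real.sqrt 2)) =
      Metric.closedBall c₁ (1 / (2 * Real.sqrt 2)))
    (β : K) (hβ : ‖β - b₁‖ < 1 / (4 * Real.sqrt 2))
    (i : ℕ) (hi : 1 < i)
    (x : K) (r : ℝ) (hr : 0 < r) (hr' : r < Real.sqrt 2 * rhoSeq i ^ 2)
    (hball : Metric.ball x r ⊆ {z : K | ‖z - c₁‖ = rhoSeq i}) :
    (R β)^[3] '' Metric.ball x r = Metric.ball ((R β)^[3] x) (4 * rhoSeq i ^ 2 * r) ∧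
    4 * rhoSeq i ^ 2 * r < Real.sqrt 2 * rhoSeq (i - 1) ^ 2 ∧
    Metric.ball ((R β)^[3] x) (4 * rhoSeq i ^ 2 * r) ⊆
      {z : K | ‖z - c₁‖ = rhoSeq (i - 1)} := by
  -- real constants
  have hs2 : Real.sqrt 2 ^ 2 = 2 := Real.sq_sqrt (by norm_num)
  set s2 := Real.sqrt 2 with hs2def
  have hs2pos : 0 < s2 := Real.sqrt_pos.mpr (by norm_num)
  have hs2gt : 7/5 < s2 := by nlinarith only [hs2, hs2pos.le]
  have hs2lt : s2 < 3/2 := by nlinarith only [hs2, hs2pos.le]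
  have hβs : ‖β - b₁‖ < s2/8 := by
    have he : 1/(4*s2) = s2/8 := by
      rw [div_eq_div_iff (by positivity) (by norm_num)]; linear_combination (-4:ℝ)*hs2
    rw [← he]; exact hβ
  have hq4 : (1:ℝ)/(2*s2) = s2/4 := by
    rw [div_eq_div_iff (by positivity) (by norm_num)]; linear_combination (-2:ℝ)*hs2
  rw [hq4] at hper
  -- rho facts
  set ρ := rhoSeq i with hρd
  have hρpos : 0 < ρ := rho_pos i
  have hρlb : s2/4 < ρ := rho_lb i
  have hρub : s2 * ρ^2 ≤ 1/4 := rho_ub i hi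
  have hρprev : rhoSeq (i-1) = 2*s2*ρ^2 := rho_succ i (by omega)
  have hρ2lb : 1/8 < ρ^2 := by
    have h1 : (s2/4)*(s2/4) < (s2/4)*ρ :=
      mul_lt_mul_of_pos_left hρlb (by positivity)
    have h2 : (s2/4)*ρ < ρ*ρ := mul_lt_mul_of_pos_right hρlb hρpos
    calc (1:ℝ)/8 = (s2/4)*(s2/4) := by linear_combination (-(1:ℝ)/16)*hs2
    _ < ρ^2 := by rw [pow_two]; linarith
  have hρ2ub : ρ^2 ≤ s2/8 := by nlinarith only [hρub, hs2, hs2pos]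
  have hρhalf : ρ < s2/2 := by
    nlinarith only [hρ2ub, hs2, hs2pos, hρpos, hs2lt]
  have hr4 : r < 1/4 := by
    have h : r < s2 * ρ^2 := hr'
    linarith only [h, hρub]
  -- K basic norms
  have ha0 : a ≠ 0 := by
    intro h; rw [h, norm_zero] at ha; norm_num at ha
  have hia : ‖1/a‖ = 1/2 := by rw [norm_div, norm_one, ha]
  have hβn : ‖β‖ = 1 := by
    rw [show β = b₁ + (β - b₁) by ring, nadd (by rw [hb₁]; linarith only [hβs, hs2lt]), hb₁]
  have hE0 : b₁*c₁^2 - 2*(1/a)*c₁ + 1/a = 0 := by linear_combination hc₁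
  have hc1sq : ‖c₁‖^2 = 1/2 := c1_norm_sq hia h2 hb₁ hE0
  have hc1n : ‖c₁‖ = s2/2 := by
    refine sq_eq_of_sq_eq (norm_nonneg c₁) (by positivity) ?_
    rw [hc1sq]; linear_combination (-(1:ℝ)/4)*hs2
  -- points
  set w₁ := R b₁ c₁ with hw₁d
  set w₂ := R b₁ w₁ with hw₂d
  set w₃ := R b₁ w₂ with hw₃d
  set y₁ := R β c₁ with hy₁d
  set x₁ := R β x with hx₁d
  set x₂ := R β x₁ with hx₂d
  set x₃ := R β x₂ with hx₃d
  have hs2' : s2^2 = 2 := hs2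
  have hs2gt1 : 1 < s2 := by linarith
  -- norms of denominators at c₁
  have hCb : ‖b₁*c₁ - 1/a‖ = s2/2 := by
    rw [Cnorm_big hia hb₁ (by rw [hc1n]; linarith only [hs2gt]), hc1n]
  have hCβc : ‖β*c₁ - 1/a‖ = s2/2 := by
    rw [Cnorm_big hia hβn (by rw [hc1n]; linarith only [hs2gt]), hc1n]
  have hCb0 : b₁*c₁ - 1/a ≠ 0 := norm_pos_iff.mp (by rw [hCb]; positivity)
  have hCβc0 : β*c₁ - 1/a ≠ 0 := norm_pos_iff.mp (by rw [hCβc]; positivity)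
  have hnum_c₁ : ‖c₁^2 - c₁‖ = s2/2 := by
    rw [nsub' (by rw [norm_pow, hc1sq, hc1n]; linarith only [hs2gt]), hc1n]
  -- w₁
  have hw₁n : ‖w₁‖ = 1 := by
    rw [hw₁d, hRdef b₁ c₁, norm_div, hnum_c₁, hCb]
    field_simp
  -- w₃ in the ball
  have hw₃B : ‖w₃ - c₁‖ ≤ s2/4 := by
    have hc₁B : c₁ ∈ Metric.closedBall c₁ (s2/4) := Metric.mem_closedBall_self (by positivity)
    have hmem : (R b₁)^[3] c₁ ∈ Metric.closedBall c₁ (s2/4) := by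
      rw [← hper]; exact Set.mem_image_of_mem _ hc₁B
    have hid : (R b₁)^[3] c₁ = w₃ := by
      rw [show (R b₁)^[3] c₁ = R b₁ (R b₁ (R b₁ c₁)) from rfl, ← hw₁d, ← hw₂d, ← hw₃d]
    rw [hid] at hmem
    simpa [Metric.mem_closedBall, dist_eq_norm] using hmem
  have hw₃n : ‖w₃‖ = s2/2 := by
    rw [show w₃ = c₁ + (w₃ - c₁) by ring, nadd (by rw [hc1n]; linarith only [hw₃B, hs2pos]), hc1n]
  have hw₃0 : w₃ ≠ 0 := norm_pos_iff.mp (by rw [hw₃n]; positivity)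
  have hw₃e : w₃ = (w₂^2 - w₂)/(b₁*w₂ - 1/a) := by rw [hw₃d, hRdef b₁ w₂]
  have hDw₂ : b₁*w₂ - 1/a ≠ 0 := by
    intro h; exact hw₃0 (by rw [hw₃e, h, div_zero])
  have hkey : ‖w₃‖ * ‖b₁*w₂ - 1/a‖ = ‖w₂‖ * ‖w₂ - 1‖ := by
    rw [hw₃e, norm_div, div_mul_cancel₀ _ (norm_ne_zero_iff.mpr hDw₂),
      show w₂^2 - w₂ = w₂*(w₂-1) by ring, norm_mul]
  have hone : ‖(1:K)‖ = 1 := norm_one (α := K)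
  have hw₂n : ‖w₂‖ = s2/4 := by
    rcases lt_trichotomy ‖w₂‖ (1/2) with hv | hv | hv
    · have hden : ‖b₁*w₂ - 1/a‖ = 1/2 := Cnorm_small hia hb₁ hv
      have hsub1 : ‖w₂ - 1‖ = 1 := by
        rw [nsub' (by rw [hone]; linarith), hone]
      rw [hw₃n, hden, hsub1, mul_one] at hkey
      linarith only [hkey]
    · exfalso
      have hden : ‖b₁*w₂ - 1/a‖ ≤ 1/2 := by
        refine (nmaxsub _ _).trans ?_
        rw [norm_mul, hb₁, one_mul, hv, hia]; norm_num
      have hsub1 : ‖w₂ - 1‖ = 1 := by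
        rw [nsub' (by rw [hone]; linarith), hone]
      rw [hw₃n, hsub1, mul_one, hv] at hkey
      have hdpos : 0 < ‖b₁*w₂ - 1/a‖ := norm_pos_iff.mpr hDw₂
      nlinarith only [hkey, hden, hdpos, hs2lt, hs2pos]
    · exfalso
      have hden : ‖b₁*w₂ - 1/a‖ = ‖w₂‖ := Cnorm_big hia hb₁ hv
      have hw2pos : (0:ℝ) < ‖w₂‖ := by linarith
      rw [hw₃n, hden] at hkey
      have hsub1 : ‖w₂ - 1‖ = s2/2 := by
        have h' : ‖w₂‖ * ‖w₂-1‖ = ‖w₂‖ * (s2/2) := by linear_combination -hkey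
        exact (mul_left_cancel₀ (ne_of_gt hw2pos) h')
      have hw₂1 : ‖w₂‖ = 1 := by
        rw [show w₂ = 1 + (w₂ - 1) by ring, nadd (by rw [hone, hsub1]; linarith only [hs2lt]), hone]
      -- three-stage contraction bound
      have contract : ∀ z, ‖z - c₁‖ ≤ s2/4 → ‖R b₁ (R b₁ (R b₁ z)) - w₃‖ ≤ s2/8 := by
        intro z hz
        have h1 : ‖R b₁ z - w₁‖ ≤ s2/8 := by
          rcases eq_or_ne z c₁ with rfl | hne
          · rw [← hw₁d, sub_self, norm_zero]; positivity
          · have hu0 : 0 < ‖z - c₁‖ := norm_pos_iff.mpr (sub_ne_zero.mpr hne)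
            have h := crit_step (b := b₁) (ia := 1/a) (u := z - c₁) hs2' hs2gt1 hia hb₁ hc1n
              (by rw [hE0, norm_zero]; exact mul_pos (div_pos hs2pos two_pos) hu0)
              (lt_of_le_of_lt hz (by linarith only [hs2pos]))
            rw [show c₁ + (z - c₁) = z by ring, ← hRdef b₁ z, ← hRdef b₁ c₁, ← hw₁d] at h
            rw [h]
            nlinarith only [hz, norm_nonneg (z - c₁), hs2, hs2pos, hs2lt]
        have h2' : ‖R b₁ (R b₁ z) - w₂‖ ≤ s2/8 := by
          have h := unit_step (b := b₁) (ia := 1/a) (z := w₁) (u := R b₁ z - w₁)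
            hia h2 hb₁ hw₁n (le_trans h1 (by linarith only [hs2lt]))
          rw [show w₁ + (R b₁ z - w₁) = R b₁ z by ring, ← hRdef b₁ (R b₁ z),
            ← hRdef b₁ w₁, ← hw₂d] at h
          rw [h]; exact h1
        have h3 : ‖R b₁ (R b₁ (R b₁ z)) - w₃‖ ≤ s2/8 := by
          have h := unit_step (b := b₁) (ia := 1/a) (z := w₂) (u := R b₁ (R b₁ z) - w₂)
            hia h2 hb₁ hw₂1 (le_trans h2' (by linarith only [hs2lt]))
          rw [show w₂ + (R b₁ (R b₁ z) - w₂) = R b₁ (R b₁ z) by ring,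
            ← hRdef b₁ (R b₁ (R b₁ z)), ← hRdef b₁ w₂, ← hw₃d] at h
          rw [h]; exact h2'
        exact h3
      obtain ⟨e, he⟩ := IsAlgClosed.exists_pow_nat_eq ((2:K)*(1/a)^2) (by norm_num : 0 < 2)
      have hen : ‖e‖ = s2/4 := by
        refine sq_eq_of_sq_eq (norm_nonneg e) (by positivity) ?_
        rw [← norm_pow, he, norm_mul, norm_pow, h2, hia]; linear_combination (-(1:ℝ)/16)*hs2
      have himg3 : ∀ p : K, ‖p - c₁‖ ≤ s2/4 → ‖p - w₃‖ ≤ s2/8 := by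
        intro p hp
        have hpB : p ∈ Metric.closedBall c₁ (s2/4) := by
          simpa [Metric.mem_closedBall, dist_eq_norm] using hp
        rw [← hper] at hpB
        obtain ⟨z, hzB, hze⟩ := hpB
        have hzc : ‖z - c₁‖ ≤ s2/4 := by
          simpa [Metric.mem_closedBall, dist_eq_norm] using hzB
        have hcon := contract z hzc
        rwa [show R b₁ (R b₁ (R b₁ z)) = (R b₁)^[3] z from rfl, hze] at hcon
      have he1 := himg3 (c₁ + e) (by simpa using hen.le)
      have he2 := himg3 c₁ (by simp; positivity)
      have hee : ‖e‖ ≤ s2/8 := by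
        rw [show e = (c₁ + e - w₃) - (c₁ - w₃) by ring]
        exact (nmaxsub _ _).trans (max_le he1 he2)
      rw [hen] at hee; linarith only [hee, hs2pos]
  -- locate x on the sphere
  have hx_sph : ‖x - c₁‖ = ρ := hball (Metric.mem_ball_self hr)
  have hxn : ‖x‖ = s2/2 := by
    rw [show x = c₁ + (x - c₁) by ring, nadd (by rw [hc1n, hx_sph]; exact hρhalf), hc1n]
  have h2c : ‖(2:K)*c₁‖ = s2/4 := by rw [norm_mul, h2, hc1n]; ring
  have hxc : ‖x + c₁‖ = ρ := by
    rw [show x + c₁ = (x - c₁) + (2*c₁) by ring,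
      nadd (by rw [h2c, hx_sph]; exact hρlb), hx_sph]
  have h2ia : ‖(2:K)*(1/a)‖ = 1/4 := by rw [norm_mul, h2, hia]; norm_num
  have hlin : ‖b₁*(x + c₁) - 2*(1/a)‖ = ρ := by
    have h1 : ‖b₁*(x+c₁)‖ = ρ := by rw [norm_mul, hb₁, one_mul, hxc]
    rw [nsub (by rw [h1, h2ia]; linarith only [hρlb, hs2gt]), h1]
  have hhalfsq : (s2/2)^2 = (1:ℝ)/2 := by linear_combination (1/4:ℝ)*hs2
  have hExn : ‖β*x^2 - 2*(1/a)*x + 1/a‖ = ρ^2 := by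
    have hdec : β*x^2 - 2*(1/a)*x + 1/a
        = (x - c₁)*(b₁*(x+c₁) - 2*(1/a)) + ((β-b₁)*x^2 + (b₁*c₁^2 - 2*(1/a)*c₁ + 1/a)) := by
      ring
    have ht1 : ‖(x - c₁)*(b₁*(x+c₁) - 2*(1/a))‖ = ρ^2 := by
      rw [norm_mul, hx_sph, hlin]; ring
    have ht2 : ‖(β-b₁)*x^2 + (b₁*c₁^2 - 2*(1/a)*c₁ + 1/a)‖ < ρ^2 := by
      rw [hE0, add_zero, norm_mul, norm_pow, hxn, hhalfsq]
      linarith only [hβs, hρ2lb, hs2lt]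
    rw [hdec, nadd (by rw [ht1]; exact ht2), ht1]
  have hCxn : ‖β*x - 1/a‖ = s2/2 := by
    rw [Cnorm_big hia hβn (by rw [hxn]; linarith only [hs2gt]), hxn]
  have hCx0 : β*x - 1/a ≠ 0 := norm_pos_iff.mp (by rw [hCxn]; positivity)
  -- stage 1 image
  have him1 : (fun z : K => (z^2 - z)/(β*z - 1/a)) '' Metric.ball x r
      = Metric.ball x₁ (2*ρ^2*r) := by
    have h := image_ball β (1/a) x r hr hCx0
      (by rw [hβn, one_mul, hCxn]; linarith only [hr4, hs2gt])
      (by rw [hCxn, hExn]; nlinarith only [hr', hs2, hs2pos])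
    rw [hExn, hCxn] at h
    rw [h, ← hRdef β x, ← hx₁d,
      show ρ^2/(s2/2)^2*r = 2*ρ^2*r by rw [hhalfsq]; ring]
  -- exact distances after stage 1
  have hEβc : ‖β*c₁^2 - 2*(1/a)*c₁ + 1/a‖ < s2/2*ρ := by
    have hd : β*c₁^2 - 2*(1/a)*c₁ + 1/a
        = (β-b₁)*c₁^2 + (b₁*c₁^2 - 2*(1/a)*c₁ + 1/a) := by ring
    rw [hd, hE0, add_zero, norm_mul, norm_pow, hc1sq]
    nlinarith only [hβs, hρlb, hs2pos, hs2, hs2lt]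
  have hx₁y₁ : ‖x₁ - y₁‖ = s2*ρ^2 := by
    have h := crit_step (b := β) (ia := 1/a) (u := x - c₁) hs2' hs2gt1 hia hβn hc1n
      (by rw [hx_sph]; exact hEβc) (by rw [hx_sph]; exact hρhalf)
    rw [show c₁ + (x - c₁) = x by ring, ← hRdef β x, ← hRdef β c₁, ← hx₁d, ← hy₁d,
      hx_sph] at h
    exact h
  have hy₁w₁ : ‖y₁ - w₁‖ = ‖β - b₁‖ := by
    have h := param_norm β b₁ (1/a) c₁ hCβc0 hCb0
    rw [← hRdef β c₁, ← hRdef b₁ c₁, ← hy₁d, ← hw₁d, hnum_c₁, hCβc, hCb, hc1n,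
      norm_sub_rev b₁ β] at h
    rw [h, div_eq_iff (by positivity)]
    ring
  have hx₁w₁ : ‖x₁ - w₁‖ = s2*ρ^2 := by
    rw [show x₁ - w₁ = (x₁ - y₁) + (y₁ - w₁) by ring,
      nadd (by rw [hx₁y₁, hy₁w₁]; nlinarith only [hβs, hρ2lb, hs2pos]), hx₁y₁]
  have hx₁n : ‖x₁‖ = 1 := by
    rw [show x₁ = w₁ + (x₁ - w₁) by ring,
      nadd (by rw [hw₁n, hx₁w₁]; linarith only [hρub]), hw₁n]
  -- radius bound for later stages
  have hρ316 : ρ^2 ≤ 3/16 := by linarith only [hρ2ub, hs2lt]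
  have hr₁ : 2*ρ^2*r ≤ 1/2 := by
    have h := mul_le_mul hρ316 hr4.le hr.le (by norm_num : (0:ℝ) ≤ 3/16)
    linarith only [h]
  have hr₁pos : 0 < 2*ρ^2*r := by positivity
  -- stage 2 image
  have hECx₁ : ‖β*x₁^2 - 2*(1/a)*x₁ + 1/a‖ = 1 := Enorm_one hia h2 hβn hx₁n
  have hCx₁ : ‖β*x₁ - 1/a‖ = 1 := by
    rw [Cnorm_big hia hβn (by rw [hx₁n]; norm_num), hx₁n]
  have hCx₁0 : β*x₁ - 1/a ≠ 0 := norm_pos_iff.mp (by rw [hCx₁]; norm_num)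
  have him2 : (fun z : K => (z^2 - z)/(β*z - 1/a)) '' Metric.ball x₁ (2*ρ^2*r)
      = Metric.ball x₂ (2*ρ^2*r) := by
    have h := image_ball β (1/a) x₁ (2*ρ^2*r) hr₁pos hCx₁0
      (by rw [hβn, one_mul, hCx₁]; linarith only [hr₁])
      (by rw [hCx₁, hECx₁, one_mul]; linarith only [hr₁])
    rw [hECx₁, hCx₁] at h
    rw [h, ← hRdef β x₁, ← hx₂d, show (1:ℝ)/1^2*(2*ρ^2*r) = 2*ρ^2*r by ring]
  -- distances after stage 2
  have hfx₁w₁ : ‖x₂ - R β w₁‖ = s2*ρ^2 := by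
    have h := unit_step (b := β) (ia := 1/a) (z := w₁) (u := x₁ - w₁) hia h2 hβn hw₁n
      (by rw [hx₁w₁]; linarith only [hρub])
    rw [show w₁ + (x₁ - w₁) = x₁ by ring, ← hRdef β x₁, ← hRdef β w₁, ← hx₂d, hx₁w₁] at h
    exact h
  have hCβw₁ : ‖β*w₁ - 1/a‖ = 1 := by
    rw [Cnorm_big hia hβn (by rw [hw₁n]; norm_num), hw₁n]
  have hCbw₁ : ‖b₁*w₁ - 1/a‖ = 1 := by
    rw [Cnorm_big hia hb₁ (by rw [hw₁n]; norm_num), hw₁n]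
  have hfw₁ : ‖R β w₁ - w₂‖ ≤ ‖β - b₁‖ := by
    have h := param_norm β b₁ (1/a) w₁ (norm_pos_iff.mp (by rw [hCβw₁]; norm_num))
      (norm_pos_iff.mp (by rw [hCbw₁]; norm_num))
    rw [← hRdef β w₁, ← hRdef b₁ w₁, ← hw₂d, hCβw₁, hCbw₁, norm_sub_rev b₁ β, hw₁n] at h
    rw [h]
    have hnum : ‖w₁^2 - w₁‖ ≤ 1 := by
      refine (nmaxsub _ _).trans ?_
      rw [norm_pow, hw₁n]; norm_num
    calc ‖w₁^2-w₁‖ * (‖β-b₁‖*1)/(1*1) = ‖w₁^2-w₁‖ * ‖β-b₁‖ := by ring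
      _ ≤ 1 * ‖β-b₁‖ := mul_le_mul_of_nonneg_right hnum (norm_nonneg _)
      _ = ‖β-b₁‖ := one_mul _
  have hx₂w₂ : ‖x₂ - w₂‖ = s2*ρ^2 := by
    rw [show x₂ - w₂ = (x₂ - R β w₁) + (R β w₁ - w₂) by ring,
      nadd (by
        rw [hfx₁w₁]
        exact lt_of_le_of_lt hfw₁ (by nlinarith only [hβs, hρ2lb, hs2pos])), hfx₁w₁]
  have hx₂n : ‖x₂‖ = s2/4 := by
    rw [show x₂ = w₂ + (x₂ - w₂) by ring,
      nadd (by rw [hw₂n, hx₂w₂]; linarith only [hρub, hs2gt]), hw₂n]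
  -- stage 3 image
  have hx₂half : ‖x₂‖ < 1/2 := by rw [hx₂n]; linarith only [hs2lt]
  have hECx₂ : ‖β*x₂^2 - 2*(1/a)*x₂ + 1/a‖ = 1/2 := Enorm_small hia h2 hβn hx₂half
  have hCx₂ : ‖β*x₂ - 1/a‖ = 1/2 := Cnorm_small hia hβn hx₂half
  have hCx₂0 : β*x₂ - 1/a ≠ 0 := norm_pos_iff.mp (by rw [hCx₂]; norm_num)
  have him3 : (fun z : K => (z^2 - z)/(β*z - 1/a)) '' Metric.ball x₂ (2*ρ^2*r)
      = Metric.ball x₃ (4*ρ^2*r) := by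
    have h := image_ball β (1/a) x₂ (2*ρ^2*r) hr₁pos hCx₂0
      (by rw [hβn, one_mul, hCx₂]; linarith only [hr₁, hr₁pos])
      (by rw [hCx₂, hECx₂]; linarith only [hr₁])
    rw [hECx₂, hCx₂] at h
    rw [h, ← hRdef β x₂, ← hx₃d, show (1:ℝ)/2/((1:ℝ)/2)^2*(2*ρ^2*r) = 4*ρ^2*r by ring]
  -- distances after stage 3
  have hx₃f : ‖x₃ - R β w₂‖ = 2*(s2*ρ^2) := by
    have hw₂half : ‖w₂‖ < 1/2 := by rw [hw₂n]; linarith only [hs2lt]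
    have h := small_step (b := β) (ia := 1/a) (z := w₂) (u := x₂ - w₂) hia h2 hβn hw₂half
      (by rw [hx₂w₂]; linarith only [hρub])
    rw [show w₂ + (x₂ - w₂) = x₂ by ring, ← hRdef β x₂, ← hRdef β w₂, ← hx₃d, hx₂w₂] at h
    exact h
  have hCβw₂ : ‖β*w₂ - 1/a‖ = 1/2 :=
    Cnorm_small hia hβn (by rw [hw₂n]; linarith only [hs2lt])
  have hCbw₂ : ‖b₁*w₂ - 1/a‖ = 1/2 :=
    Cnorm_small hia hb₁ (by rw [hw₂n]; linarith only [hs2lt])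
  have hnw₂ : ‖w₂^2 - w₂‖ = s2/4 := by
    rw [nsub' (by rw [norm_pow, hw₂n]; nlinarith only [hs2, hs2gt]), hw₂n]
  have hfw₂ : ‖R β w₂ - w₃‖ ≤ s2/16 := by
    have h := param_norm β b₁ (1/a) w₂ (norm_pos_iff.mp (by rw [hCβw₂]; norm_num))
      (norm_pos_iff.mp (by rw [hCbw₂]; norm_num))
    rw [← hRdef β w₂, ← hRdef b₁ w₂, ← hw₃d, hCβw₂, hCbw₂, norm_sub_rev b₁ β, hw₂n,
      hnw₂] at h
    rw [h]
    have heq : s2/4 * (‖β-b₁‖ * (s2/4)) / (1/2*(1/2)) = ‖β-b₁‖/2 := by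
      rw [div_eq_iff (by norm_num)]
      linear_combination (‖β - b₁‖/16)*hs2
    rw [heq]
    linarith only [hβs]
  have hfc : ‖R β w₂ - c₁‖ ≤ s2/4 := by
    rw [show R β w₂ - c₁ = (R β w₂ - w₃) + (w₃ - c₁) by ring]
    refine (nmax _ _).trans (max_le ?_ hw₃B)
    linarith only [hfw₂, hs2pos]
  have hx₃c : ‖x₃ - c₁‖ = 2*(s2*ρ^2) := by
    rw [show x₃ - c₁ = (x₃ - R β w₂) + (R β w₂ - c₁) by ring,
      nadd (by
        rw [hx₃f]
        exact lt_of_le_of_lt hfc (by nlinarith only [hρ2lb, hs2pos])), hx₃f]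
  -- conclusions
  have hit3 : (R β)^[3] x = x₃ := by
    rw [show (R β)^[3] x = R β (R β (R β x)) from rfl, ← hx₁d, ← hx₂d, ← hx₃d]
  have hρprev2 : rhoSeq (i-1) = 2*(s2*ρ^2) := by rw [hρprev]; ring
  refine ⟨?_, ?_, ?_⟩
  · rw [hit3, show (R β)^[3] = (R β) ∘ ((R β) ∘ (R β)) from rfl, Set.image_comp, Set.image_comp,
      show R β = fun z : K => (z^2 - z)/(β*z - 1/a) from funext (hRdef β),
      him1, him2, him3]
  · rw [hρprev]
    have he1 : s2*(2*s2*ρ^2)^2 = 8*s2*ρ^4 := by linear_combination (4*s2*ρ^4)*hs2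
    rw [he1]
    have h1 : 4*ρ^2*r < 4*ρ^2*(s2*ρ^2) := by
      have := mul_lt_mul_of_pos_left hr' (show (0:ℝ) < 4*ρ^2 by positivity)
      linarith only [this]
    have h2 : (0:ℝ) < s2*ρ^4 := by positivity
    nlinarith only [h1, h2]
  · intro p hp
    rw [Metric.mem_ball, dist_eq_norm, hit3] at hp
    have hlt : ‖p - x₃‖ < 2*(s2*ρ^2) := by
      have h1 : 4*ρ^2*r < 4*ρ^2*(s2*ρ^2) := by
        have := mul_lt_mul_of_pos_left hr' (show (0:ℝ) < 4*ρ^2 by positivity)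
        linarith only [this]
      have h2 : 4*ρ^2*(s2*ρ^2) ≤ 2*(s2*ρ^2) := by
        have hsp : 0 < s2*ρ^2 := by positivity
        nlinarith only [hρ316, hsp]
      linarith only [hp, h1, h2]
    rw [Set.mem_setOf_eq, show p - c₁ = (x₃ - c₁) + (p - x₃) by ring,
      nadd (by rw [hx₃c]; exact hlt), hx₃c]
    exact hρprev2.symm
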